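/- Let r ∈ ℓ²(ℤ) have nonnegative entries, with norm ‖r‖ and tail norms E_N(r) = (Σ_{|j|≥N} r(j)²)^{1/2}. There is an absolute constant C such that for every N ≥ 1, Σ_{|n|>N} Σ_{k≠n} r(n+k)²/(n-k)² ≤ C(‖r‖²/N + E_N(r)²). -/

import Mathlib

/-!
Substituting `m = n + k` turns the double sum into `∑ₘ r(m)² ∑_{|n|>N} (2n - m)⁻²`. The inner weight
is at most `∑_{j ≠ 0} j⁻²` for every `m`, and when `|m| < N` it is at most
`∑_{|n|>N} n⁻² ≤ 4 / (N + 1)`, because then `|2n - m| ≥ |n|`. Splitting the sum over `m` at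
`|m| = N` gives the bound with `C = ∑ⱼ j⁻² + 4`. The sums are exchanged in `ℝ≥0∞`, where this needs
no summability.
-/

open scoped ENNReal

-- No summability is needed: if `f` is not summable, both sides are `0`.
lemma tsum_eq_toReal_tsum_ofReal {ι : Type*} {f : ι → ℝ} (hf : ∀ i, 0 ≤ f i) :
    ∑' i, f i = (∑' i, ENNReal.ofReal (f i)).toReal := by
  rw [ENNReal.tsum_toReal_eq fun _ => ENNReal.ofReal_ne_top]
  exact tsum_congr fun i => (ENNReal.toReal_ofReal (hf i)).symm

lemma ofReal_tsum_le_tsum_ofReal {ι : Type*} {f : ι → ℝ} (hf : ∀ i, 0 ≤ f i) :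
    ENNReal.ofReal (∑' i, f i) ≤ ∑' i, ENNReal.ofReal (f i) := by
  rw [tsum_eq_toReal_tsum_ofReal hf]
  exact ENNReal.ofReal_toReal_le

lemma tsum_le_of_tsum_ofReal_le {ι : Type*} {f : ι → ℝ} (hf : ∀ i, 0 ≤ f i) {b : ℝ}
    (hb : 0 ≤ b) (h : ∑' i, ENNReal.ofReal (f i) ≤ ENNReal.ofReal b) : ∑' i, f i ≤ b := by
  rw [tsum_eq_toReal_tsum_ofReal hf]
  exact ENNReal.toReal_le_of_le_ofReal hb h

noncomputable def invSq (j : ℤ) : ℝ≥0∞ := ENNReal.ofReal ((j : ℝ) ^ 2)⁻¹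

lemma invSq_le_invSq {n j : ℤ} (hn : n ≠ 0) (h : |n| ≤ |j|) : invSq j ≤ invSq n := by
  refine ENNReal.ofReal_le_ofReal (inv_anti₀ (by positivity) (sq_le_sq.mpr ?_))
  exact_mod_cast h

lemma tsum_inv_sq_nat_gt_le (N : ℕ) :
    ∑' i : {i : ℕ // N < i}, ENNReal.ofReal ((i : ℝ) ^ 2)⁻¹ ≤ ENNReal.ofReal (2 / (N + 1)) := by
  refine (tsum_subtype {i : ℕ | N < i} fun i : ℕ => ENNReal.ofReal ((i : ℝ) ^ 2)⁻¹).trans_le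
    (ENNReal.tsum_le_of_sum_range_le fun M => ?_)
  rw [Finset.sum_indicator_eq_sum_filter, ← ENNReal.ofReal_sum_of_nonneg fun _ _ => by positivity]
  refine ENNReal.ofReal_le_ofReal ((le_of_eq ?_).trans (sum_Ioo_inv_sq_le N M))
  congr 1
  ext i
  simp only [Finset.mem_filter, Finset.mem_range, Set.mem_ofPred_eq, Finset.mem_Ioo]
  omega

lemma tsum_invSq_abs_gt_le (N : ℕ) :
    ∑' n : {n : ℤ // (N : ℤ) < |n|}, invSq n ≤ ENNReal.ofReal (4 / (N + 1)) := by
  let e : {n : ℤ // (N : ℤ) < |n|} → Bool × {i : ℕ // N < i} :=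
    fun n => (decide (0 ≤ (n : ℤ)),
      ⟨(n : ℤ).natAbs, by exact_mod_cast Int.abs_eq_natAbs (n : ℤ) ▸ n.2⟩)
  have he : Function.Injective e := by
    rintro ⟨m, hm⟩ ⟨n, hn⟩ h
    simp only [e, Prod.ext_iff, Subtype.mk.injEq, decide_eq_decide] at h
    exact Subtype.ext (show m = n by clear hm hn; omega)
  calc ∑' n : {n : ℤ // (N : ℤ) < |n|}, invSq n = ∑' n, ENNReal.ofReal (((e n).2 : ℝ) ^ 2)⁻¹ := by
        congr with n
        simp [invSq, e, Nat.cast_natAbs, sq_abs]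
    _ ≤ ∑' p : Bool × {i : ℕ // N < i}, ENNReal.ofReal ((p.2 : ℝ) ^ 2)⁻¹ :=
        ENNReal.tsum_comp_le_tsum_of_injective he fun p => ENNReal.ofReal ((p.2 : ℝ) ^ 2)⁻¹
    _ = 2 * ∑' i : {i : ℕ // N < i}, ENNReal.ofReal ((i : ℝ) ^ 2)⁻¹ := by
        rw [ENNReal.tsum_prod', tsum_fintype, Fintype.sum_bool, two_mul]
    _ ≤ 2 * ENNReal.ofReal (2 / (N + 1)) := by gcongr; exact tsum_inv_sq_nat_gt_le N
    _ = ENNReal.ofReal (4 / (N + 1)) := by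
        rw [← ENNReal.ofReal_ofNat 2, ← ENNReal.ofReal_mul zero_le_two]
        ring_nf

lemma abs_le_abs_two_mul_sub {α : Type*} [CommRing α] [LinearOrder α] [IsStrictOrderedRing α]
    {m n : α} (h : |m| ≤ |n|) : |n| ≤ |2 * n - m| := by
  have := abs_sub_abs_le_abs_sub (2 * n) m
  rw [abs_mul, abs_two] at this
  linarith

lemma tsum_invSq_two_mul_sub_le (N : ℕ) (m : ℤ) :
    ∑' n : {n : ℤ // (N : ℤ) < |n|}, invSq (2 * n - m) ≤
      {m : ℤ | (N : ℤ) ≤ |m|}.indicator (fun _ => ∑' j, invSq j) m +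
        ENNReal.ofReal (4 / (N + 1)) := by
  by_cases hm : (N : ℤ) ≤ |m|
  · rw [Set.indicator_of_mem (s := {m : ℤ | (N : ℤ) ≤ |m|}) hm]
    refine le_add_right (ENNReal.tsum_comp_le_tsum_of_injective ?_ invSq)
    exact fun a b h => Subtype.ext (by simpa using h)
  · rw [Set.indicator_of_notMem (s := {m : ℤ | (N : ℤ) ≤ |m|}) hm, zero_add]
    have hN : (0 : ℤ) ≤ N := Int.natCast_nonneg N
    refine (ENNReal.tsum_le_tsum fun n => invSq_le_invSq ?_ ?_).trans (tsum_invSq_abs_gt_le N)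
    · exact abs_pos.mp (hN.trans_lt n.2)
    · exact abs_le_abs_two_mul_sub (by linarith [n.2])

lemma tsum_tsum_mul_invSq_le (g : ℤ → ℝ≥0∞) (N : ℕ) :
    ∑' n : {n : ℤ // (N : ℤ) < |n|}, ∑' k : ℤ, g (n + k) * invSq (n - k) ≤
      (∑' j, invSq j) * ∑' m : {m : ℤ // (N : ℤ) ≤ |m|}, g m +
        ENNReal.ofReal (4 / (N + 1)) * ∑' m, g m := by
  set K := ∑' j, invSq j
  set c := ENNReal.ofReal (4 / (N + 1))
  calc ∑' n : {n : ℤ // (N : ℤ) < |n|}, ∑' k : ℤ, g (n + k) * invSq (n - k)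
      = ∑' n : {n : ℤ // (N : ℤ) < |n|}, ∑' m : ℤ, g m * invSq (2 * n - m) := by
        congr with n
        rw [← (Equiv.addLeft (n : ℤ)).tsum_eq fun m => g m * invSq (2 * n - m)]
        congr with k
        rw [Equiv.coe_addLeft, show 2 * (n : ℤ) - (n + k) = n - k by ring]
    _ = ∑' m, g m * ∑' n : {n : ℤ // (N : ℤ) < |n|}, invSq (2 * n - m) := by
        rw [ENNReal.tsum_comm]
        simp_rw [ENNReal.tsum_mul_left]
    _ ≤ ∑' m, g m * ({m : ℤ | (N : ℤ) ≤ |m|}.indicator (fun _ => K) m + c) := by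
        gcongr with m
        exact tsum_invSq_two_mul_sub_le N m
    _ = K * ∑' m : {m : ℤ // (N : ℤ) ≤ |m|}, g m + c * ∑' m, g m := by
        have htail : ∑' m : {m : ℤ // (N : ℤ) ≤ |m|}, g m =
            ∑' m, {m : ℤ | (N : ℤ) ≤ |m|}.indicator g m := tsum_subtype _ g
        rw [htail, mul_comm K, mul_comm c, ← ENNReal.tsum_mul_right, ← ENNReal.tsum_mul_right,
          ← ENNReal.tsum_add]
        congr with m
        by_cases hm : (N : ℤ) ≤ |m| <;> simp [hm, mul_add]

lemma ofReal_tsum_ne_sq_div_sq_le (r : ℤ → ℝ) (n : ℤ) :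
    ENNReal.ofReal (∑' k : {k : ℤ // k ≠ n}, r (n + k) ^ 2 / ((n - k : ℤ) : ℝ) ^ 2) ≤
      ∑' k : ℤ, ENNReal.ofReal (r (n + k) ^ 2) * invSq (n - k) := by
  refine (ofReal_tsum_le_tsum_ofReal fun k => by positivity).trans (le_of_eq_of_le ?_
    (ENNReal.tsum_comp_le_tsum_of_injective (Subtype.val_injective (p := (· ≠ n))) _))
  congr with k
  rw [div_eq_mul_inv, ENNReal.ofReal_mul (sq_nonneg _)]
  rfl

lemma tsum_tsum_sq_div_sq_le (r : ℤ → ℝ) (hr : Summable fun k => r k ^ 2) (N : ℕ) :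
    ∑' n : {n : ℤ // (N : ℤ) < |n|}, ∑' k : {k : ℤ // k ≠ n},
        r (n + k) ^ 2 / ((n - k : ℤ) : ℝ) ^ 2 ≤
      (∑' j : ℤ, ((j : ℝ) ^ 2)⁻¹) * ∑' j : {j : ℤ // (N : ℤ) ≤ |j|}, r j ^ 2 +
        4 / (N + 1) * ∑' k, r k ^ 2 := by
  have hK : Summable fun j : ℤ => ((j : ℝ) ^ 2)⁻¹ := by
    simpa [one_div] using Real.summable_one_div_int_pow.mpr one_lt_two
  have hKe : ENNReal.ofReal (∑' j : ℤ, ((j : ℝ) ^ 2)⁻¹) = ∑' j, invSq j :=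
    ENNReal.ofReal_tsum_of_nonneg (fun _ => by positivity) hK
  have hTe : ENNReal.ofReal (∑' j : {j : ℤ // (N : ℤ) ≤ |j|}, r j ^ 2) =
      ∑' j : {j : ℤ // (N : ℤ) ≤ |j|}, ENNReal.ofReal (r j ^ 2) :=
    ENNReal.ofReal_tsum_of_nonneg (fun _ => by positivity) (hr.subtype _)
  have hSe : ENNReal.ofReal (∑' k, r k ^ 2) = ∑' k, ENNReal.ofReal (r k ^ 2) :=
    ENNReal.ofReal_tsum_of_nonneg (fun _ => by positivity) hr
  refine tsum_le_of_tsum_ofReal_le (fun n => tsum_nonneg fun k => by positivity)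
    (by positivity) ?_
  refine (ENNReal.tsum_le_tsum fun n : {n : ℤ // (N : ℤ) < |n|} =>
    ofReal_tsum_ne_sq_div_sq_le r n).trans
    ((tsum_tsum_mul_invSq_le (fun k => ENNReal.ofReal (r k ^ 2)) N).trans_eq ?_)
  rw [ENNReal.ofReal_add (by positivity) (by positivity), ENNReal.ofReal_mul (by positivity),
    ENNReal.ofReal_mul (by positivity), hKe, hTe, hSe]

theorem stmt_6 :
    ∃ C : ℝ, 0 < C ∧ ∀ (r : ℤ → ℝ), (∀ k, 0 ≤ r k) →
      Summable (fun k => (r k) ^ 2) → ∀ N : ℕ, 1 ≤ N →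
      ∑' n : {n : ℤ // (N : ℤ) < |n|}, ∑' k : {k : ℤ // k ≠ (n : ℤ)},
          (r ((n : ℤ) + (k : ℤ))) ^ 2 / (((n : ℤ) - (k : ℤ) : ℤ) : ℝ) ^ 2 ≤
        C * ((∑' k : ℤ, (r k) ^ 2) / N +
          ∑' j : {j : ℤ // (N : ℤ) ≤ |j|}, (r (j : ℤ)) ^ 2) := by
  set K := ∑' j : ℤ, ((j : ℝ) ^ 2)⁻¹
  have hK : 0 ≤ K := tsum_nonneg fun j => by positivity
  refine ⟨K + 4, by positivity, fun r _ hr N hN => (tsum_tsum_sq_div_sq_le r hr N).trans ?_⟩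
  set S := ∑' k : ℤ, r k ^ 2
  set T := ∑' j : {j : ℤ // (N : ℤ) ≤ |j|}, r j ^ 2
  have hS : 0 ≤ S := tsum_nonneg fun k => by positivity
  have hT : 0 ≤ T := tsum_nonneg fun j => by positivity
  have hN₀ : (0 : ℝ) < N := by exact_mod_cast hN
  have hN₁ : 4 / (N + 1) * S ≤ 4 / N * S := by gcongr; linarith
  have hKS : 0 ≤ K * (S / N) := by positivity
  linarith [show (K + 4) * (S / N + T) = K * (S / N) + K * T + 4 / N * S + 4 * T by ring]
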